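/- arXiv:1705.02185 — 2 statements merged into one kernel-verified Lean document; each statement's English description precedes it below -/
import Mathlib

section
/- Let 0 < x ≤ 1, r ≥ 0, and 0 ≤ v ≤ 1. Then G_{r,v}(x) ≤ r x^v + (1-r)((1-v) + v x) ≤ g_{r,v}(x), where g_{r,v}(x) = v(x-1)(r((1+x)/2)^(v-1) + (1-r)) + 1 and G_{r,v}(x) = (v(x-1)/2)(r x^(v-1) + 2 - r) + 1. -/
/-!
For `0 ≤ v ≤ 1` the derivative `v t ^ (v - 1)` of `t ^ v` is convex on `(0, ∞)`, so the
Hermite–Hadamard inequalities bound `1 - x ^ v = ∫ₓ¹ v t ^ (v - 1) dt` between `1 - x` times the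
value of the integrand at the midpoint `(1 + x) / 2` and `1 - x` times the mean of its values at
the endpoints. Both bounds are affine in `x ^ v`, and the two sides of the theorem are obtained
by weighting them with `r` and the linear bound `1 + v (x - 1)` with `1 - r`. The Hermite–Hadamard
inequalities are proved without integrals, by monotonicity of a suitable antiderivative.
-/

open Set

theorem ConvexOn.sub_le_trapezoid_of_hasDerivAt {f g : ℝ → ℝ} {a b : ℝ} (hab : a ≤ b)
    (hf : ∀ t ∈ Icc a b, HasDerivAt f (g t) t) (hg : ConvexOn ℝ (Icc a b) g) :
    f b - f a ≤ (b - a) * (g a + g b) / 2 := by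
  obtain rfl | hab := hab.eq_or_lt
  · simp
  -- `F'` is `(b - a)` times the gap between the chord of `g` over `[a, b]` and `g`.
  set F : ℝ → ℝ := fun t => (g b - g a) * (t - a) ^ 2 / 2 - (b - a) * (f t - g a * t)
  have hF : ∀ t ∈ Icc a b,
      HasDerivAt F ((b - a) * g a + (t - a) * g b - (b - a) * g t - (t - a) * g a) t := by
    intro t ht
    have := ((((hasDerivAt_id t).sub_const a).pow 2).const_mul (g b - g a)).div_const 2 |>.sub
      (((hf t ht).sub ((hasDerivAt_id t).const_mul (g a))).const_mul (b - a))
    exact this.congr_deriv (by simp; ring)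
  have hmono : MonotoneOn F (Icc a b) := by
    refine monotoneOn_of_hasDerivWithinAt_nonneg (convex_Icc a b)
      (fun t ht => (hF t ht).continuousAt.continuousWithinAt)
      (fun t ht => (hF t (interior_subset ht)).hasDerivWithinAt) fun t ht => ?_
    rw [interior_Icc] at ht
    have := hg.secant_mono_aux1 (left_mem_Icc.2 hab.le) (right_mem_Icc.2 hab.le) ht.1 ht.2
    linarith
  have := hmono (left_mem_Icc.2 hab.le) (right_mem_Icc.2 hab.le) hab.le
  simp only [F] at this
  have hscaled : (b - a) * (f b - f a) ≤ (b - a) * ((b - a) * (g a + g b) / 2) := by linarith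
  exact le_of_mul_le_mul_left hscaled (sub_pos.2 hab)

theorem ConvexOn.midpoint_le_sub_of_hasDerivAt {f g : ℝ → ℝ} {a b : ℝ} (hab : a ≤ b)
    (hf : ∀ t ∈ Icc a b, HasDerivAt f (g t) t) (hg : ConvexOn ℝ (Icc a b) g) :
    (b - a) * g ((a + b) / 2) ≤ f b - f a := by
  set m := (a + b) / 2
  -- `G' ≥ 0` is midpoint convexity of `g` around `m`.
  set G : ℝ → ℝ := fun s => f (m + s) - f (m - s) - 2 * s * g m
  have hmem : ∀ s ∈ Icc 0 ((b - a) / 2), m + s ∈ Icc a b ∧ m - s ∈ Icc a b := by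
    intro s hs
    simp only [mem_Icc, m] at hs ⊢
    constructor <;> constructor <;> linarith [hs.1, hs.2]
  have hG : ∀ s ∈ Icc 0 ((b - a) / 2), HasDerivAt G (g (m + s) + g (m - s) - 2 * g m) s := by
    intro s hs
    have hright := (hf _ (hmem s hs).1).comp s ((hasDerivAt_id s).const_add m)
    have hleft := (hf _ (hmem s hs).2).comp s ((hasDerivAt_id s).const_sub m)
    exact ((hright.sub hleft).sub (((hasDerivAt_id s).const_mul 2).mul_const (g m))).congr_deriv
      (by simp)
  have hmono : MonotoneOn G (Icc 0 ((b - a) / 2)) := by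
    refine monotoneOn_of_hasDerivWithinAt_nonneg (convex_Icc _ _)
      (fun s hs => (hG s hs).continuousAt.continuousWithinAt)
      (fun s hs => (hG s (interior_subset hs)).hasDerivWithinAt) fun s hs => ?_
    obtain ⟨hright, hleft⟩ := hmem s (interior_subset hs)
    have := hg.2 hleft hright (by norm_num : (0 : ℝ) ≤ 1 / 2) (by norm_num : (0 : ℝ) ≤ 1 / 2)
      (by norm_num)
    simp only [smul_eq_mul] at this
    rw [show 1 / 2 * (m - s) + 1 / 2 * (m + s) = m by ring] at this
    linarith
  have hb : (0 : ℝ) ≤ (b - a) / 2 := by linarith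
  have := hmono (left_mem_Icc.2 hb) (right_mem_Icc.2 hb) hb
  simp only [G, add_zero, sub_zero, mul_zero, zero_mul] at this
  rw [show m + (b - a) / 2 = b by ring, show m - (b - a) / 2 = a by ring] at this
  linarith

theorem convexOn_rpow_of_nonpos {p : ℝ} (hp : p ≤ 0) :
    ConvexOn ℝ (Ioi 0) fun x : ℝ => x ^ p := by
  refine ⟨convex_Ioi 0, fun x hx y hy a b ha hb hab => ?_⟩
  have hxy : 0 < a * x + b * y := convex_Ioi (0 : ℝ) hx hy ha hb hab
  have hlog : a * Real.log x + b * Real.log y ≤ Real.log (a * x + b * y) :=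
    strictConcaveOn_log_Ioi.concaveOn.2 hx hy ha hb hab
  simp only [smul_eq_mul, Real.rpow_def_of_pos hxy, Real.rpow_def_of_pos (mem_Ioi.1 hx),
    Real.rpow_def_of_pos (mem_Ioi.1 hy)]
  calc Real.exp (Real.log (a * x + b * y) * p)
      ≤ Real.exp (a * (Real.log x * p) + b * (Real.log y * p)) :=
        Real.exp_le_exp.2 (by nlinarith)
    _ ≤ a * Real.exp (Real.log x * p) + b * Real.exp (Real.log y * p) :=
        convexOn_exp.2 (mem_univ _) (mem_univ _) ha hb hab

theorem convexOn_mul_rpow_sub_one {v : ℝ} (hv0 : 0 ≤ v) (hv1 : v ≤ 1) :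
    ConvexOn ℝ (Ioi 0) fun t : ℝ => v * t ^ (v - 1) :=
  (convexOn_rpow_of_nonpos (by linarith)).smul hv0

theorem rpow_sub_rpow_le_trapezoid {a b v : ℝ} (ha : 0 < a) (hab : a ≤ b) (hv0 : 0 ≤ v)
    (hv1 : v ≤ 1) : b ^ v - a ^ v ≤ (b - a) * (v * a ^ (v - 1) + v * b ^ (v - 1)) / 2 :=
  ConvexOn.sub_le_trapezoid_of_hasDerivAt hab
    (fun _ ht => Real.hasDerivAt_rpow_const (Or.inl (ha.trans_le ht.1).ne'))
    ((convexOn_mul_rpow_sub_one hv0 hv1).subset (fun _ ht => ha.trans_le ht.1) (convex_Icc a b))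

theorem mul_midpoint_rpow_le_rpow_sub_rpow {a b v : ℝ} (ha : 0 < a) (hab : a ≤ b) (hv0 : 0 ≤ v)
    (hv1 : v ≤ 1) : (b - a) * (v * ((a + b) / 2) ^ (v - 1)) ≤ b ^ v - a ^ v :=
  ConvexOn.midpoint_le_sub_of_hasDerivAt hab
    (fun _ ht => Real.hasDerivAt_rpow_const (Or.inl (ha.trans_le ht.1).ne'))
    ((convexOn_mul_rpow_sub_one hv0 hv1).subset (fun _ ht => ha.trans_le ht.1) (convex_Icc a b))

theorem heron_bounds_le_one (x r v : ℝ) (hx0 : 0 < x) (hx1 : x ≤ 1) (hr : 0 ≤ r)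
    (hv0 : 0 ≤ v) (hv1 : v ≤ 1) :
    v * (x - 1) / 2 * (r * x ^ (v - 1) + 2 - r) + 1
      ≤ r * x ^ v + (1 - r) * ((1 - v) + v * x) ∧
    r * x ^ v + (1 - r) * ((1 - v) + v * x)
      ≤ v * (x - 1) * (r * ((1 + x) / 2) ^ (v - 1) + (1 - r)) + 1 := by
  have htrapezoid := rpow_sub_rpow_le_trapezoid hx0 hx1 hv0 hv1
  have hmidpoint := mul_midpoint_rpow_le_rpow_sub_rpow hx0 hx1 hv0 hv1
  simp only [Real.one_rpow, mul_one] at htrapezoid hmidpoint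
  rw [add_comm x 1] at hmidpoint
  constructor
  · linarith [mul_le_mul_of_nonneg_left htrapezoid hr]
  · linarith [mul_le_mul_of_nonneg_left hmidpoint hr]
end

section
/- For 0 ≤ v ≤ 1, r ≤ 1, and t ≥ 1, we have ((1-v) + v t^(-1))^(-1) ≤ t^v ≤ G_{r,v}(t), where G_{r,v}(t) = (v(t-1)/2)(r t^(v-1) + 2 - r) + 1. -/
/-!
The left inequality is weighted AM-GM applied to `1` and `t⁻¹`. Since `t ^ (v - 1) ≤ 1`, the
right-hand side decreases in `r`, so it suffices to take `r = 1`, where the bound is the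
trapezoid estimate of `t ^ v - 1 = ∫₁ᵗ v s ^ (v - 1) ds`. Writing `t = exp (2x)`, the gap of that
estimate is `exp (v x) * (v sinh ((2 - v) x) - (2 - v) sinh (v x))`, which is nonnegative because
`sinh` is convex on `[0, ∞)` and vanishes at `0`.
-/

open Real Set

theorem convexOn_sinh_Ici : ConvexOn ℝ (Ici 0) sinh := by
  refine MonotoneOn.convexOn_of_deriv (convex_Ici 0) continuous_sinh.continuousOn
    differentiable_sinh.differentiableOn ?_
  rw [Real.deriv_sinh, interior_Ici]
  intro x hx y hy hxy
  exact cosh_le_cosh.2 (by rwa [abs_of_pos hx, abs_of_pos hy])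

theorem ConvexOn.map_mul_le_mul {f : ℝ → ℝ} (hf : ConvexOn ℝ (Ici 0) f) (hf0 : f 0 ≤ 0)
    {c x : ℝ} (hc0 : 0 ≤ c) (hc1 : c ≤ 1) (hx : 0 ≤ x) : f (c * x) ≤ c * f x := by
  have h := hf.2 (mem_Ici.2 hx) self_mem_Ici hc0 (sub_nonneg.2 hc1) (add_sub_cancel c 1)
  simp only [smul_eq_mul, mul_zero, add_zero] at h
  nlinarith

theorem one_sub_add_mul_inv_inv_le_rpow {t v : ℝ} (ht : 0 < t) (hv0 : 0 ≤ v) (hv1 : v ≤ 1) :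
    ((1 - v) + v * t⁻¹)⁻¹ ≤ t ^ v := by
  have amgm := geom_mean_le_arith_mean2_weighted (sub_nonneg.2 hv1) hv0 zero_le_one
    (inv_nonneg.2 ht.le) (sub_add_cancel 1 v)
  rw [one_rpow, one_mul, mul_one, inv_rpow ht.le] at amgm
  exact inv_le_of_inv_le₀ (by positivity) amgm

theorem two_sub_mul_sinh_mul_le {v x : ℝ} (hv0 : 0 ≤ v) (hv1 : v ≤ 1) (hx : 0 ≤ x) :
    (2 - v) * sinh (v * x) ≤ v * sinh ((2 - v) * x) := by
  have h2v : 0 < 2 - v := by linarith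
  have h := convexOn_sinh_Ici.map_mul_le_mul sinh_zero.le (c := v / (2 - v)) (x := (2 - v) * x)
    (div_nonneg hv0 h2v.le) ((div_le_one h2v).2 (by linarith)) (mul_nonneg h2v.le hx)
  rwa [show v / (2 - v) * ((2 - v) * x) = v * x by field_simp, div_mul_eq_mul_div,
    le_div_iff₀ h2v, mul_comm] at h

theorem rpow_le_trapezoid {t v : ℝ} (ht : 1 ≤ t) (hv0 : 0 ≤ v) (hv1 : v ≤ 1) :
    t ^ v ≤ v * (t - 1) / 2 * (t ^ (v - 1) + 1) + 1 := by
  obtain ⟨x, hx, rfl⟩ : ∃ x, 0 ≤ x ∧ t = exp (2 * x) :=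
    ⟨log t / 2, by linarith [log_nonneg ht],
      by rw [mul_div_cancel₀ _ two_ne_zero, exp_log (by linarith)]⟩
  have gap : v * (exp (2 * x) - 1) / 2 * (exp (2 * x) ^ (v - 1) + 1) + 1 - exp (2 * x) ^ v
      = exp (v * x) * (v * sinh ((2 - v) * x) - (2 - v) * sinh (v * x)) := by
    have e1 : exp (2 * x) ^ v = exp (v * x) ^ 2 := by rw [← exp_mul, ← exp_nat_mul]; ring_nf
    have e2 : exp (2 * x) ^ (v - 1) = exp (v * x) / exp ((2 - v) * x) := by
      rw [← exp_mul, ← exp_sub]; ring_nf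
    have e3 : exp (2 * x) = exp (v * x) * exp ((2 - v) * x) := by rw [← exp_add]; ring_nf
    rw [e1, e2, e3, sinh_eq, sinh_eq, exp_neg, exp_neg]
    field_simp
    ring
  nlinarith [exp_pos (v * x), two_sub_mul_sinh_mul_le hv0 hv1 hx]

theorem harmonic_le_pow_le_Grv (t r v : ℝ) (hv0 : 0 ≤ v) (hv1 : v ≤ 1)
    (hr : r ≤ 1) (ht : 1 ≤ t) :
    ((1 - v) + v * t⁻¹)⁻¹ ≤ t ^ v ∧
    t ^ v ≤ v * (t - 1) / 2 * (r * t ^ (v - 1) + 2 - r) + 1 := by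
  refine ⟨one_sub_add_mul_inv_inv_le_rpow (by linarith) hv0 hv1,
    (rpow_le_trapezoid ht hv0 hv1).trans ?_⟩
  have hpow : t ^ (v - 1) ≤ 1 := rpow_le_one_of_one_le_of_nonpos ht (by linarith)
  have hcoef : 0 ≤ v * (t - 1) / 2 := by have := sub_nonneg.2 ht; positivity
  gcongr ?_ + 1
  exact mul_le_mul_of_nonneg_left (by nlinarith) hcoef
end
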